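/- Let π : C → D be a surjective morphism of k-coalgebras, and regard C as a right D-comodule via ρ = (id ⊗ π) ∘ Δ_C. Assume C is injective as a right D-comodule, in the sense that there exists a homomorphism of right D-comodules r : C ⊗ D → C (C ⊗ D the cofree right D-comodule, with coaction id ⊗ Δ_D) such that r ∘ ρ = id_C. Let (B, θ_B) be a left C-contramodule which is a retract of a free C-contramodule: there exist a k-vector space V and C-contramodule homomorphisms s : B → Hom_k(C,V) and p : Hom_k(C,V) → B with p ∘ s = id_B. Then B, equipped with the restricted D-contra-action θ_res(φ) = θ_B(φ ∘ π), is a retract of a free D-contramodule: there exist a k-vector space W and D-contramodule homomorphisms s' : B → Hom_k(D,W) and p' : Hom_k(D,W) → B with p' ∘ s' = id_B. -/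

import Mathlib

/-!
STATEMENT 15: Let π : C → D be a surjective coalgebra morphism such that C is injective as a
right D-comodule (the coaction ρ = (id ⊗ π) ∘ Δ_C splits by a D-comodule map r : C ⊗ D → C).
If a left C-contramodule (B, θ_B) is a retract of a free C-contramodule, then B with the
restricted D-contra-action θ_res(φ) = θ_B(φ ∘ π) is a retract of a free D-contramodule.
(Restriction along an exact subgroup preserves projectivity.)
-/

open TensorProduct LinearMap

noncomputable section

universe u₁ u₂ u₃ u₄ u₅

variable (k : Type u₁) [Field k]
variable (C : Type u₂) [AddCommGroup C] [Module k C] [Coalgebra k C]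
variable (D : Type u₃) [AddCommGroup D] [Module k D] [Coalgebra k D]

def IsContramodule (A : Type*) [AddCommGroup A] [Module k A] [Coalgebra k A]
    {B' : Type*} [AddCommGroup B'] [Module k B']
    (θ : (A →ₗ[k] B') →ₗ[k] B') : Prop :=
  (∀ Φ : A →ₗ[k] (A →ₗ[k] B'),
      θ (θ ∘ₗ Φ) = θ ((TensorProduct.lift Φ.flip) ∘ₗ Coalgebra.comul)) ∧
  (∀ b : B', θ ((LinearMap.toSpanSingleton k B' b) ∘ₗ Coalgebra.counit) = b)

def IsContraHom (A : Type*) [AddCommGroup A] [Module k A] [Coalgebra k A]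
    {B' D' : Type*} [AddCommGroup B'] [Module k B'] [AddCommGroup D'] [Module k D']
    (θB : (A →ₗ[k] B') →ₗ[k] B') (θD : (A →ₗ[k] D') →ₗ[k] D')
    (f : B' →ₗ[k] D') : Prop :=
  ∀ φ : A →ₗ[k] B', f (θB φ) = θD (f ∘ₗ φ)

/-- The free contra-action on `Hom_k(A,V)`. -/
def freeContra (A : Type*) [AddCommGroup A] [Module k A] [Coalgebra k A]
    (V : Type*) [AddCommGroup V] [Module k V] :
    (A →ₗ[k] (A →ₗ[k] V)) →ₗ[k] (A →ₗ[k] V) :=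
  (LinearMap.lcomp k V (Coalgebra.comul (R := k) (A := A))) ∘ₗ
    (TensorProduct.uncurry (RingHom.id k) A A V) ∘ₗ (LinearMap.lflip (R₀ := k)).toLinearMap

/-- The right `D`-comodule structure `ρ = (id ⊗ π) ∘ Δ_C` on `C`. -/
def resCoaction (π : C →ₗ[k] D) : C →ₗ[k] C ⊗[k] D :=
  (TensorProduct.map LinearMap.id π) ∘ₗ (Coalgebra.comul (R := k) (A := C))

/-- The coaction of the cofree right `D`-comodule `C ⊗ D`. -/
def cofreeCoaction : (C ⊗[k] D) →ₗ[k] (C ⊗[k] D) ⊗[k] D :=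
  (TensorProduct.assoc k C D D).symm.toLinearMap ∘ₗ
    (TensorProduct.map LinearMap.id Coalgebra.comul)

/-!
Write `ρ` for the coaction of `C` over `D`. For a right `D`-comodule `M`, the space `Hom_k(M, V)` is a
left `D`-contramodule, and precomposition with a comodule map is a contramodule map. The restriction
of the free `C`-contramodule `Hom_k(C, V)` is the dual of `(C, ρ)`, while the free `D`-contramodule
`Hom_k(D, Hom_k(C, V)) ≅ Hom_k(C ⊗ D, V)` is the dual of the cofree comodule `C ⊗ D`. Dualizing the
split comodule embedding `ρ : C → C ⊗ D` with retraction `r` exhibits the restricted free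
`C`-contramodule as a retract of a free `D`-contramodule, and retracts compose.
-/

section ContraHom

variable {k}
variable {A A' X Y Z : Type*} [AddCommGroup A] [Module k A] [Coalgebra k A]
  [AddCommGroup A'] [Module k A'] [Coalgebra k A']
  [AddCommGroup X] [Module k X] [AddCommGroup Y] [Module k Y] [AddCommGroup Z] [Module k Z]
  {θX : (A →ₗ[k] X) →ₗ[k] X} {θY : (A →ₗ[k] Y) →ₗ[k] Y} {θZ : (A →ₗ[k] Z) →ₗ[k] Z}

theorem IsContraHom.comp {f : X →ₗ[k] Y} {g : Y →ₗ[k] Z} (hf : IsContraHom k A θX θY f)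
    (hg : IsContraHom k A θY θZ g) : IsContraHom k A θX θZ (g ∘ₗ f) := fun φ => by
  rw [comp_apply, hf, hg, comp_assoc]

theorem IsContraHom.symm {e : X ≃ₗ[k] Y} (he : IsContraHom k A θX θY e.toLinearMap) :
    IsContraHom k A θY θX e.symm.toLinearMap := fun φ => by
  apply e.injective
  rw [LinearEquiv.coe_coe, LinearEquiv.apply_symm_apply, ← LinearEquiv.coe_coe, he,
    ← comp_assoc, LinearEquiv.comp_coe, LinearEquiv.symm_trans_self, LinearEquiv.refl_toLinearMap,
    id_comp]

theorem IsContraHom.restrict {f : X →ₗ[k] Y} (π : A →ₗ[k] A') (hf : IsContraHom k A θX θY f) :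
    IsContraHom k A' (θX ∘ₗ lcomp k X π) (θY ∘ₗ lcomp k Y π) f := fun φ =>
  hf (φ ∘ₗ π)

end ContraHom

section Dual

variable {k}
variable {M N P Q V : Type*} [AddCommGroup M] [Module k M] [AddCommGroup N] [Module k N]
  [AddCommGroup P] [Module k P] [AddCommGroup Q] [Module k Q] [AddCommGroup V] [Module k V]

theorem uncurry_flip_comp_map (Φ : P →ₗ[k] (N →ₗ[k] V)) (f : M →ₗ[k] N) (g : Q →ₗ[k] P) :
    uncurry (RingHom.id k) N P V Φ.flip ∘ₗ TensorProduct.map f g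
      = uncurry (RingHom.id k) M Q V (lcomp k V f ∘ₗ Φ ∘ₗ g).flip :=
  TensorProduct.ext' fun _ _ => rfl

variable (k M N V) in
def tensorCurryEquiv : (N →ₗ[k] (M →ₗ[k] V)) ≃ₗ[k] (M ⊗[k] N →ₗ[k] V) :=
  lflip ≪≫ₗ TensorProduct.lift.equiv (RingHom.id k) M N V

variable {D}

variable (V) in
/-- `θ(Φ)(m) = Φ(m₁)(m₀)` where `ρM m = m₀ ⊗ m₁`: the contramodule `Hom_k(M, V)` dual to the
comodule `M`. -/
def dualContra (ρM : M →ₗ[k] M ⊗[k] D) : (D →ₗ[k] (M →ₗ[k] V)) →ₗ[k] (M →ₗ[k] V) :=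
  lcomp k V ρM ∘ₗ uncurry (RingHom.id k) M D V ∘ₗ (lflip (R₀ := k)).toLinearMap

theorem isContraHom_lcomp_dualContra {ρM : M →ₗ[k] M ⊗[k] D} {ρN : N →ₗ[k] N ⊗[k] D}
    {f : M →ₗ[k] N} (hf : ρN ∘ₗ f = TensorProduct.map f LinearMap.id ∘ₗ ρM) :
    IsContraHom k D (dualContra V ρN) (dualContra V ρM) (lcomp k V f) := fun Φ => by
  ext m
  change uncurry (RingHom.id k) N D V Φ.flip (ρN (f m)) = _
  rw [← comp_apply ρN, hf]
  exact LinearMap.congr_fun (uncurry_flip_comp_map Φ f LinearMap.id) (ρM m)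

variable (M V) in
theorem isContraHom_tensorCurryEquiv :
    IsContraHom k D (freeContra k D (M →ₗ[k] V)) (dualContra V (cofreeCoaction k M D))
      (tensorCurryEquiv k M D V).toLinearMap := fun Φ => by
  refine TensorProduct.ext' fun m d => ?_
  change uncurry (RingHom.id k) D D _ Φ.flip (Coalgebra.comul d) m
    = uncurry (RingHom.id k) (M ⊗[k] D) D V (tensorCurryEquiv k M D V ∘ₗ Φ).flip
        ((TensorProduct.assoc k M D D).symm (m ⊗ₜ Coalgebra.comul d))
  induction Coalgebra.comul (R := k) d using TensorProduct.induction_on with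
  | zero => simp
  | tmul d₁ d₂ => simp [tensorCurryEquiv]
  | add t t' ht ht' => simp only [map_add, tmul_add, LinearMap.add_apply, ht, ht']

variable (V) in
theorem freeContra_comp_lcomp (π : C →ₗ[k] P) :
    freeContra k C V ∘ₗ lcomp k (C →ₗ[k] V) π = dualContra V (resCoaction k C P π) := by
  ext Ψ c
  exact (LinearMap.congr_fun (uncurry_flip_comp_map Ψ LinearMap.id π) _).symm

end Dual

theorem cofreeCoaction_comp_resCoaction {π : C →ₗ[k] D}
    (hπ : Coalgebra.comul ∘ₗ π = TensorProduct.map π π ∘ₗ Coalgebra.comul) :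
    cofreeCoaction k C D ∘ₗ resCoaction k C D π
      = TensorProduct.map (resCoaction k C D π) LinearMap.id ∘ₗ resCoaction k C D π := by
  have hmap : TensorProduct.map LinearMap.id Coalgebra.comul ∘ₗ TensorProduct.map LinearMap.id π
      = TensorProduct.map LinearMap.id (TensorProduct.map π π) ∘ₗ
          Coalgebra.comul.lTensor C := by
    rw [← TensorProduct.map_comp, hπ, LinearMap.lTensor, ← TensorProduct.map_comp, id_comp]
  calc cofreeCoaction k C D ∘ₗ resCoaction k C D π
      = (TensorProduct.assoc k C D D).symm.toLinearMap ∘ₗ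
          TensorProduct.map LinearMap.id (TensorProduct.map π π) ∘ₗ
          Coalgebra.comul.lTensor C ∘ₗ Coalgebra.comul := by
        simp only [cofreeCoaction, resCoaction, comp_assoc]
        rw [← comp_assoc (Coalgebra.comul (R := k) (A := C)), hmap, comp_assoc]
    _ = TensorProduct.map (TensorProduct.map LinearMap.id π) π ∘ₗ
          Coalgebra.comul.rTensor C ∘ₗ Coalgebra.comul := by
        rw [← Coalgebra.coassoc_symm, ← comp_assoc _ _ (TensorProduct.map _ π),
          TensorProduct.map_map_comp_assoc_symm_eq]
        simp only [comp_assoc]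
    _ = TensorProduct.map (resCoaction k C D π) LinearMap.id ∘ₗ resCoaction k C D π := by
        simp only [resCoaction, LinearMap.rTensor, ← comp_assoc, ← TensorProduct.map_comp, id_comp,
          comp_id]

theorem restriction_preserves_retract_of_free
    -- `π : C → D` is a surjective morphism of coalgebras:
    (π : C →ₗ[k] D)
    (hπcomul : Coalgebra.comul ∘ₗ π = (TensorProduct.map π π) ∘ₗ Coalgebra.comul)
    -- `C` is injective as a right `D`-comodule:
    (r : C ⊗[k] D →ₗ[k] C)
    (hr_hom : (resCoaction k C D π) ∘ₗ r
        = (TensorProduct.map r LinearMap.id) ∘ₗ cofreeCoaction k C D)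
    (hr_split : r ∘ₗ (resCoaction k C D π) = LinearMap.id)
    -- `(B, θ_B)` is a left `C`-contramodule which is a retract of a free `C`-contramodule:
    (B : Type u₄) [AddCommGroup B] [Module k B]
    (θB : (C →ₗ[k] B) →ₗ[k] B)
    (V : Type u₅) [AddCommGroup V] [Module k V]
    (s : B →ₗ[k] (C →ₗ[k] V)) (p : (C →ₗ[k] V) →ₗ[k] B)
    (hs : IsContraHom k C θB (freeContra k C V) s)
    (hp : IsContraHom k C (freeContra k C V) θB p)
    (hps : p ∘ₗ s = LinearMap.id) :
    -- then `(B, θ_res)` is a retract of a free `D`-contramodule: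
    ∃ (W : Type (max u₂ u₅)) (_ : AddCommGroup W) (_ : Module k W)
      (s' : B →ₗ[k] (D →ₗ[k] W)) (p' : (D →ₗ[k] W) →ₗ[k] B),
      IsContraHom k D (θB ∘ₗ (LinearMap.lcomp k B π)) (freeContra k D W) s' ∧
      IsContraHom k D (freeContra k D W) (θB ∘ₗ (LinearMap.lcomp k B π)) p' ∧
      p' ∘ₗ s' = LinearMap.id := by
  let e := tensorCurryEquiv k C D V
  have he : IsContraHom k D _ _ e.toLinearMap := isContraHom_tensorCurryEquiv C V
  have hs_res : IsContraHom k D (θB ∘ₗ lcomp k B π) (dualContra V (resCoaction k C D π)) s :=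
    freeContra_comp_lcomp C V π ▸ hs.restrict π
  have hp_res : IsContraHom k D (dualContra V (resCoaction k C D π)) (θB ∘ₗ lcomp k B π) p :=
    freeContra_comp_lcomp C V π ▸ hp.restrict π
  refine ⟨C →ₗ[k] V, inferInstance, inferInstance,
    e.symm.toLinearMap ∘ₗ lcomp k V r ∘ₗ s, p ∘ₗ lcomp k V (resCoaction k C D π) ∘ₗ e.toLinearMap,
    (hs_res.comp (isContraHom_lcomp_dualContra hr_hom)).comp he.symm,
    (he.comp (isContraHom_lcomp_dualContra (cofreeCoaction_comp_resCoaction k C D hπcomul))).comp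
      hp_res, ?_⟩
  ext b
  simp only [comp_apply, LinearEquiv.coe_coe, LinearEquiv.apply_symm_apply]
  rw [lcomp_apply', lcomp_apply', comp_assoc, hr_split, comp_id, ← comp_apply p s, hps]
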